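/- Consider the EDmC (min-consensus) dynamics on a connected graph. Assume the inputs u have variation bounded by Π ≥ 0, Δ is an upper bound on the diameter of G (Δ ≥ δ), and x satisfies the EDmC update with Δ + 1 levels. Then for every k ≥ Δ + 1 and every vertex i ∈ V, the top-level state tracks the minimum with error |x_k(i, Δ) − u̲_k| ≤ (Δ + 1)·Π, where u̲_k = min_{i∈V} u_k(i). -/

import Mathlib

/-!
After `ℓ + 1` steps the level-`ℓ` state of vertex `i` is the minimum of an input over the
closed ball of radius `ℓ` around `i`, because the minimum over the balls of radius `ℓ` centred
at `i` and its neighbours is the minimum over the ball of radius `ℓ + 1`. Once `ℓ = Δ` reaches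
the diameter the ball is the whole vertex set, so `x_k(i, Δ) = u̲_{k-Δ-1}`; each input moves by
at most `(Δ + 1) Π` in those `Δ + 1` steps, and taking the minimum is `1`-Lipschitz.
-/

open Finset

theorem Finset.inf'_le_inf'_add {α ι : Type*} [LinearOrder α] [Add α] {s : Finset ι}
    (hs : s.Nonempty) {f g : ι → α} {c : α} (hfg : ∀ i ∈ s, f i ≤ g i + c) :
    s.inf' hs f ≤ s.inf' hs g + c := by
  obtain ⟨i, hi, hgi⟩ := exists_mem_eq_inf' hs g
  rw [hgi]
  exact inf'_le_of_le f hi (hfg i hi)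

section OrderedGroup

variable {α : Type*} [AddCommGroup α] [LinearOrder α] [IsOrderedAddMonoid α]

theorem Finset.abs_inf'_sub_inf'_le {ι : Type*} {s : Finset ι} (hs : s.Nonempty) {f g : ι → α}
    {c : α} (hfg : ∀ i ∈ s, |f i - g i| ≤ c) : |s.inf' hs f - s.inf' hs g| ≤ c := by
  rw [abs_sub_le_iff, sub_le_iff_le_add', sub_le_iff_le_add']
  refine ⟨inf'_le_inf'_add hs fun i hi => ?_, inf'_le_inf'_add hs fun i hi => ?_⟩
  · exact sub_le_iff_le_add'.mp (abs_sub_le_iff.mp (hfg i hi)).1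
  · exact sub_le_iff_le_add'.mp (abs_sub_le_iff.mp (hfg i hi)).2

theorem abs_sub_le_nsmul_of_abs_sub_succ_le {f : ℕ → α} {c : α}
    (hf : ∀ k, |f (k + 1) - f k| ≤ c) (m d : ℕ) : |f (m + d) - f m| ≤ d • c := by
  induction d with
  | zero => simp
  | succ d ih =>
    calc |f (m + (d + 1)) - f m| ≤ |f (m + d + 1) - f (m + d)| + |f (m + d) - f m| :=
          abs_sub_le _ _ _
      _ ≤ c + d • c := add_le_add (hf _) ih
      _ = (d + 1) • c := by rw [succ_nsmul']

end OrderedGroup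

namespace SimpleGraph

variable {V : Type*} [Fintype V] (G : SimpleGraph V)

noncomputable def closedBall (i : V) (ℓ : ℕ) : Finset V :=
  univ.filter fun j => G.dist i j ≤ ℓ

variable {G}

@[simp]
theorem mem_closedBall {i j : V} {ℓ : ℕ} : j ∈ G.closedBall i ℓ ↔ G.dist i j ≤ ℓ := by
  simp [closedBall]

theorem closedBall_nonempty (i : V) (ℓ : ℕ) : (G.closedBall i ℓ).Nonempty :=
  ⟨i, by simp⟩

theorem Connected.closedBall_zero (hconn : G.Connected) (i : V) : G.closedBall i 0 = {i} := by
  ext j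
  simp [hconn.dist_eq_zero_iff, eq_comm]

theorem Connected.biUnion_closedBall [DecidableEq V] [DecidableRel G.Adj] (hconn : G.Connected)
    (i : V) (ℓ : ℕ) :
    (insert i (G.neighborFinset i)).biUnion (G.closedBall · ℓ) = G.closedBall i (ℓ + 1) := by
  ext k
  simp only [mem_biUnion, mem_insert, mem_neighborFinset, mem_closedBall]
  constructor
  · rintro ⟨j, hj, hjk⟩
    have hij : G.dist i j ≤ 1 := by
      rcases hj with rfl | hadj
      · simp
      · exact (dist_eq_one_iff_adj.mpr hadj).le
    linarith [hconn.dist_triangle (u := i) (v := j) (w := k)]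
  · intro hik
    obtain ⟨p, hp⟩ := hconn.exists_walk_length_eq_dist i k
    cases p with
    | nil => exact ⟨i, .inl rfl, by simp⟩
    | cons hadj q =>
      rw [Walk.length_cons] at hp
      exact ⟨_, .inr hadj, by linarith [dist_le q]⟩

end SimpleGraph

open SimpleGraph in
theorem edmc_level_eq_inf'_closedBall {V : Type*} [Fintype V] [DecidableEq V]
    {G : SimpleGraph V} [DecidableRel G.Adj] (hconn : G.Connected)
    {u : ℕ → V → ℝ} {Δ : ℕ} {x : ℕ → V → Fin (Δ + 1) → ℝ}
    (hx0 : ∀ k i, x (k + 1) i 0 = u k i)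
    (hx : ∀ k i (ℓ : Fin Δ), x (k + 1) i ℓ.succ =
      (insert i (G.neighborFinset i)).inf' (insert_nonempty i _)
        (fun j => x k j ℓ.castSucc))
    (ℓ : ℕ) (hℓ : ℓ < Δ + 1) (m : ℕ) (i : V) :
    x (m + ℓ + 1) i ⟨ℓ, hℓ⟩ = (G.closedBall i ℓ).inf' (closedBall_nonempty i ℓ) (u m) := by
  induction ℓ generalizing i with
  | zero =>
    simp_rw [hconn.closedBall_zero]
    exact hx0 m i
  | succ ℓ ih =>
    calc x (m + (ℓ + 1) + 1) i ⟨ℓ + 1, hℓ⟩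
        = (insert i (G.neighborFinset i)).inf' (insert_nonempty i _)
            fun j => (G.closedBall j ℓ).inf' (closedBall_nonempty j ℓ) (u m) :=
          (hx (m + ℓ + 1) i ⟨ℓ, by omega⟩).trans (inf'_congr _ rfl fun j _ => ih (by omega) j)
      _ = _ := by
          rw [← inf'_biUnion _ _ fun j => closedBall_nonempty j ℓ]
          exact inf'_congr _ (hconn.biUnion_closedBall i ℓ) fun _ _ => rfl

theorem edmc_min_tracking_error_general
    {V : Type*} [Fintype V] [Nonempty V] [DecidableEq V]
    (G : SimpleGraph V) [DecidableRel G.Adj] (hconn : G.Connected)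
    (Pi : ℝ)
    (u : ℕ → V → ℝ)
    (hu : ∀ k i, |u (k + 1) i - u k i| ≤ Pi)
    (δ : ℕ) (hδ : δ = Finset.univ.sup fun p : V × V => G.dist p.1 p.2)
    (Δ : ℕ) (hΔ : δ ≤ Δ)
    (x : ℕ → V → Fin (Δ + 1) → ℝ)
    (hx0 : ∀ k i, x (k + 1) i 0 = u k i)
    (hx : ∀ k i (ℓ : Fin Δ), x (k + 1) i ℓ.succ =
      (insert i (G.neighborFinset i)).inf' (insert_nonempty i _)
        (fun j => x k j ℓ.castSucc)) :
    ∀ k, Δ + 1 ≤ k → ∀ i : V,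
      |x k i (Fin.last Δ) - Finset.univ.inf' univ_nonempty (u k)| ≤ ((Δ : ℝ) + 1) * Pi := by
  intro k hk i
  obtain ⟨m, rfl⟩ : ∃ m, k = m + Δ + 1 := ⟨k - (Δ + 1), by omega⟩
  have hball : G.closedBall i Δ = univ := eq_univ_of_forall fun j => by
    have : G.dist i j ≤ δ := hδ ▸ le_sup (f := fun p : V × V => G.dist p.1 p.2) (mem_univ (i, j))
    simpa using this.trans hΔ
  have hlevel : x (m + Δ + 1) i (Fin.last Δ) = univ.inf' univ_nonempty (u m) :=
    (edmc_level_eq_inf'_closedBall hconn hx0 hx Δ Δ.lt_succ_self m i).trans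
      (inf'_congr _ hball fun _ _ => rfl)
  rw [hlevel, abs_sub_comm]
  refine abs_inf'_sub_inf'_le _ fun j _ => ?_
  simpa [← add_assoc, nsmul_eq_mul] using
    abs_sub_le_nsmul_of_abs_sub_succ_le (f := fun k => u k j) (hu · j) m (Δ + 1)

/-- EDmC (min-consensus) tracking error bound (Theorem 4). -/
theorem edmc_min_tracking_error
    {V : Type*} [Fintype V] [Nonempty V] [DecidableEq V]
    (G : SimpleGraph V) [DecidableRel G.Adj] (hconn : G.Connected)
    (Pi : ℝ) (hPi : 0 ≤ Pi)
    (u : ℕ → V → ℝ)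
    (hu : ∀ k i, |u (k + 1) i - u k i| ≤ Pi)
    (δ : ℕ) (hδ : δ = Finset.univ.sup fun p : V × V => G.dist p.1 p.2)
    (Δ : ℕ) (hΔ : δ ≤ Δ)
    (x : ℕ → V → Fin (Δ + 1) → ℝ)
    (hx0 : ∀ k i, x (k + 1) i 0 = u k i)
    (hx : ∀ k i (ℓ : Fin Δ), x (k + 1) i ℓ.succ =
      (insert i (G.neighborFinset i)).inf' (insert_nonempty i _)
        (fun j => x k j ℓ.castSucc)) :
    ∀ k, Δ + 1 ≤ k → ∀ i : V,
      |x k i (Fin.last Δ) - Finset.univ.inf' univ_nonempty (u k)| ≤ ((Δ : ℝ) + 1) * Pi :=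
  edmc_min_tracking_error_general G hconn Pi u hu δ hδ Δ hΔ x hx0 hx
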